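/- Let μ be a compactly supported probability measure on ℝ^d with μ(B(x,r)) ≲ r^s for all x ∈ ℝ^d and r > 0. Then for every f ∈ L²(μ) and every R ≥ 1, one has ∫_{|ξ| ≤ R} |\widehat{f dμ}(ξ)|² dξ ≲ R^{d−s} ‖f‖²_{L²(μ)}, where the implicit constant depends only on d, s, and the Frostman constant of μ. -/

import Mathlib

open MeasureTheory Metric Set Matrix
open scoped RealInnerProductSpace ENNReal FourierTransform

/-- e^{2πit} -/
noncomputable def ePi (t : ℝ) : ℂ := Complex.exp (2 * Real.pi * Complex.I * t)

/-- Fourier transform of the measure `f dμ`. -/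
noncomputable def ftM {d : ℕ} (μ : Measure (EuclideanSpace ℝ (Fin d)))
    (f : EuclideanSpace ℝ (Fin d) → ℂ) (ξ : EuclideanSpace ℝ (Fin d)) : ℂ :=
  ∫ x, ePi (-⟪x, ξ⟫) * f x ∂μ

/-!
Majorize the indicator of the ball `|ξ| ≤ R` by `e^π` times the Gaussian weight
`exp (-π |ξ|² / R²)`. Expanding `|\widehat{f dμ}|²` and integrating the weight first turns the
weighted integral into `∫∫ f(x) conj (f(y)) k(x, y) dμ(x) dμ(y)`, where
`k(x, y) = R^d exp (-π R² |x - y|²)` is the Fourier transform of the weight. Since `k` is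
symmetric and nonnegative, AM-GM bounds this by `‖f‖²_{L²(μ)} · sup_x ∫ k(x, y) dμ(y)`. By the
layer-cake formula, `∫ exp (-(|x - y| / r)²) dμ(y)` is an integral over `t ∈ (0, 1)` of the
`μ`-measures of balls of radius `r √(log 1/t)`, which the Frostman condition bounds by
`C rˢ (log 1/t)^{s/2} ≲ rˢ t^{-1/2}`; with `r = 1/R` this gives `sup_x ∫ k ≲ R^{d-s}`.
-/

open scoped Real ComplexConjugate

lemma norm_ePi (t : ℝ) : ‖ePi t‖ = 1 := by
  simp [ePi, Complex.norm_exp]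

lemma ePi_add (s t : ℝ) : ePi (s + t) = ePi s * ePi t := by
  simp only [ePi, ← Complex.exp_add]; push_cast; ring_nf

lemma conj_ePi (t : ℝ) : conj (ePi t) = ePi (-t) := by
  simp only [ePi, ← Complex.exp_conj, map_mul, Complex.conj_I, Complex.conj_ofNat,
    Complex.conj_ofReal]
  push_cast; ring_nf

lemma continuous_ePi : Continuous ePi := by
  unfold ePi; fun_prop

lemma ePi_eq_fourierChar (t : ℝ) : ePi t = 𝐞 t := by
  rw [Real.fourierChar_apply, ePi]; push_cast; ring_nf

section Gaussian

variable {V : Type*} [NormedAddCommGroup V] [InnerProductSpace ℝ V] [FiniteDimensional ℝ V]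
  [MeasurableSpace V] [BorelSpace V] {R : ℝ}

lemma integrable_gaussian_dilation (hR : 0 < R) :
    Integrable (fun ξ : V ↦ Real.exp (-π * ‖ξ‖ ^ 2 / R ^ 2)) := by
  have hb : 0 < ((π / R ^ 2 : ℝ) : ℂ).re := by rw [Complex.ofReal_re]; positivity
  refine (GaussianFourier.integrable_cexp_neg_mul_sq_norm_add hb 0 (0 : V)).norm.congr
    (ae_of_all _ fun ξ ↦ ?_)
  dsimp only
  rw [Complex.norm_exp, zero_mul, add_zero, ← Complex.ofReal_pow, ← Complex.ofReal_neg,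
    ← Complex.ofReal_mul, Complex.ofReal_re]
  ring_nf

lemma fourier_gaussian_dilation (hR : 0 < R) (z : V) :
    𝓕 (fun ξ : V ↦ ((Real.exp (-π * ‖ξ‖ ^ 2 / R ^ 2) : ℝ) : ℂ)) z =
      ((R ^ Module.finrank ℝ V * Real.exp (-π * R ^ 2 * ‖z‖ ^ 2) : ℝ) : ℂ) := by
  have hb : 0 < ((π / R ^ 2 : ℝ) : ℂ).re := by rw [Complex.ofReal_re]; positivity
  have hgauss := fourier_gaussian_innerProductSpace hb z
  have hscale : (π : ℂ) / ((π / R ^ 2 : ℝ) : ℂ) = ((R ^ 2 : ℝ) : ℂ) := by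
    push_cast; field_simp
  have hpow : ((R ^ 2 : ℝ) : ℂ) ^ ((Module.finrank ℝ V : ℂ) / 2) =
      ((R ^ Module.finrank ℝ V : ℝ) : ℂ) := by
    rw [← Complex.ofReal_natCast, ← Complex.ofReal_ofNat, ← Complex.ofReal_div,
      ← Complex.ofReal_cpow (sq_nonneg R), ← Real.rpow_natCast R 2, ← Real.rpow_mul hR.le,
      Nat.cast_ofNat, mul_div_cancel₀ _ two_ne_zero, Real.rpow_natCast]
  convert hgauss using 2
  · ext ξ
    push_cast
    ring_nf
  · rw [hscale, hpow]
    push_cast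
    field_simp

end Gaussian

section Fourier

variable {d : ℕ} {μ : Measure (EuclideanSpace ℝ (Fin d))}

lemma ftM_eq_fourierIntegral (f : EuclideanSpace ℝ (Fin d) → ℂ) :
    ftM μ f = VectorFourier.fourierIntegral 𝐞 μ (innerₗ _) f := by
  ext ξ
  simp [ftM, VectorFourier.fourierIntegral, ePi_eq_fourierChar, Circle.smul_def]

lemma continuous_ftM {f : EuclideanSpace ℝ (Fin d) → ℂ} (hf : Integrable f μ) :
    Continuous (ftM μ f) := by
  rw [ftM_eq_fourierIntegral]
  exact VectorFourier.fourierIntegral_continuous Real.continuous_fourierChar continuous_inner hf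

lemma norm_ftM_le (f : EuclideanSpace ℝ (Fin d) → ℂ) (ξ : EuclideanSpace ℝ (Fin d)) :
    ‖ftM μ f ξ‖ ≤ ∫ x, ‖f x‖ ∂μ := by
  rw [ftM_eq_fourierIntegral]
  exact VectorFourier.norm_fourierIntegral_le_integral_norm _ _ _ _ _

lemma fourier_eq_integral_ePi (w : EuclideanSpace ℝ (Fin d) → ℂ) (z : EuclideanSpace ℝ (Fin d)) :
    𝓕 w z = ∫ ξ, ePi (-⟪ξ, z⟫) * w ξ := by
  simp [Real.fourier_eq, ePi_eq_fourierChar, Circle.smul_def]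

theorem integral_norm_ftM_sq_mul [SigmaFinite μ] {f : EuclideanSpace ℝ (Fin d) → ℂ}
    (hf : Integrable f μ) {w : EuclideanSpace ℝ (Fin d) → ℂ} (hw : Integrable w) :
    ∫ ξ, (‖ftM μ f ξ‖ ^ 2 : ℂ) * w ξ =
      ∫ p, f p.1 * conj (f p.2) * 𝓕 w (p.1 - p.2) ∂μ.prod μ := by
  set Φ : EuclideanSpace ℝ (Fin d) → EuclideanSpace ℝ (Fin d) × EuclideanSpace ℝ (Fin d) → ℂ :=
    fun ξ p ↦ ePi (-⟪ξ, p.1 - p.2⟫) * w ξ * (f p.1 * conj (f p.2))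
  have hΦ : ∀ ξ, (‖ftM μ f ξ‖ ^ 2 : ℂ) * w ξ = ∫ p, Φ ξ p ∂μ.prod μ := by
    intro ξ
    rw [← Complex.mul_conj', ftM, ← integral_conj, ← integral_prod_mul, ← integral_mul_const]
    refine integral_congr_ae (ae_of_all _ fun p ↦ ?_)
    have hphase : -⟪ξ, p.1 - p.2⟫ = -⟪p.1, ξ⟫ + -(-⟪p.2, ξ⟫) := by
      rw [inner_sub_right, real_inner_comm ξ, real_inner_comm ξ]; ring
    simp only [Φ, hphase, ePi_add, map_mul, conj_ePi]
    ring
  have hΦ_int : Integrable (Function.uncurry Φ) (volume.prod (μ.prod μ)) := by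
    have hprod :=
      hw.mul_prod (hf.mul_prod (Complex.conjCLE.toContinuousLinearMap.integrable_comp hf))
    have hphase : Continuous fun q : EuclideanSpace ℝ (Fin d) ×
        (EuclideanSpace ℝ (Fin d) × EuclideanSpace ℝ (Fin d)) ↦ ePi (-⟪q.1, q.2.1 - q.2.2⟫) :=
      continuous_ePi.comp (by fun_prop)
    refine (hprod.bdd_mul hphase.aestronglyMeasurable (ae_of_all _ fun q ↦ (norm_ePi _).le)).congr
      (ae_of_all _ fun q ↦ ?_)
    simp [Φ, Function.uncurry, mul_assoc]
  rw [integral_congr_ae (ae_of_all _ hΦ), integral_integral_swap hΦ_int]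
  refine integral_congr_ae (ae_of_all _ fun p ↦ ?_)
  simp only [Φ]
  rw [integral_mul_const, fourier_eq_integral_ePi, mul_comm]

lemma integrable_norm_ftM_sq_mul {f : EuclideanSpace ℝ (Fin d) → ℂ} (hf : Integrable f μ)
    {w : EuclideanSpace ℝ (Fin d) → ℝ} (hw : Integrable w) :
    Integrable (fun ξ ↦ ‖ftM μ f ξ‖ ^ 2 * w ξ) :=
  hw.bdd_mul ((continuous_ftM hf).norm.pow 2).aestronglyMeasurable (ae_of_all _ fun ξ ↦ by
    rw [norm_pow, norm_norm]
    exact pow_le_pow_left₀ (norm_nonneg _) (norm_ftM_le f ξ) 2)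

end Fourier

lemma Real.log_inv_rpow_half_le {s t : ℝ} (hs : 0 < s) (ht₀ : 0 < t) (ht₁ : t ≤ 1) :
    Real.log t⁻¹ ^ (s / 2) ≤ s ^ (s / 2) * t ^ (-(1 / 2) : ℝ) := by
  have hlog : Real.log t⁻¹ ≤ s * t ^ (-(1 / s)) := by
    calc Real.log t⁻¹ ≤ t⁻¹ ^ (1 / s) / (1 / s) :=
          Real.log_le_rpow_div (by positivity) (by positivity)
      _ = s * t ^ (-(1 / s)) := by rw [Real.inv_rpow ht₀.le, Real.rpow_neg ht₀.le]; field_simp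
  calc Real.log t⁻¹ ^ (s / 2) ≤ (s * t ^ (-(1 / s))) ^ (s / 2) :=
        Real.rpow_le_rpow (Real.log_nonneg (one_le_inv_iff₀.2 ⟨ht₀, ht₁⟩)) hlog (by positivity)
    _ = s ^ (s / 2) * t ^ (-(1 / 2) : ℝ) := by
        rw [Real.mul_rpow hs.le (by positivity), ← Real.rpow_mul ht₀.le]
        congr 2
        field_simp

lemma integral_Ioo_rpow_neg_one_half : ∫ t in Ioo (0 : ℝ) 1, t ^ (-(1 / 2) : ℝ) = 2 := by
  rw [← integral_Ioc_eq_integral_Ioo, ← intervalIntegral.integral_of_le zero_le_one,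
    integral_rpow (Or.inl (by norm_num)), Real.zero_rpow (by norm_num), Real.one_rpow]
  norm_num

def IsFrostman {X : Type*} [PseudoMetricSpace X] [MeasurableSpace X] (μ : Measure X)
    (C s : ℝ) : Prop :=
  ∀ (x : X) (r : ℝ), 0 < r → (μ (closedBall x r)).toReal ≤ C * r ^ s

section Frostman

variable {X : Type*} [PseudoMetricSpace X] {r : ℝ}

lemma setOf_lt_exp_neg_sq_dist_subset (x : X) (hr : 0 < r) {t : ℝ} (ht : 0 < t) :
    {y | t < Real.exp (-(dist x y / r) ^ 2)} ⊆ closedBall x (r * √(Real.log t⁻¹)) := by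
  intro y hy
  have hlt : (dist x y / r) ^ 2 < Real.log t⁻¹ := by
    have := Real.log_lt_log ht hy
    rw [Real.log_exp] at this
    rw [Real.log_inv]; linarith
  rw [mem_closedBall, dist_comm, ← div_le_iff₀' hr]
  exact Real.le_sqrt_of_sq_le hlt.le

variable [MeasurableSpace X] {μ : Measure X} {C s : ℝ}

lemma IsFrostman.measureReal_setOf_lt_exp_neg_sq_dist_le [IsFiniteMeasure μ] (hμ : IsFrostman μ C s)
    (hs : 0 < s) (hr : 0 < r) (x : X) {t : ℝ} (ht₀ : 0 < t) (ht₁ : t < 1) :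
    (μ {y | t < Real.exp (-(dist x y / r) ^ 2)}).toReal ≤
      C * s ^ (s / 2) * r ^ s * t ^ (-(1 / 2) : ℝ) := by
  have hlog : 0 < Real.log t⁻¹ := Real.log_pos ((one_lt_inv₀ ht₀).2 ht₁)
  have hC : 0 ≤ C := by
    have := (ENNReal.toReal_nonneg).trans (hμ x 1 one_pos)
    simpa using this
  calc (μ {y | t < Real.exp (-(dist x y / r) ^ 2)}).toReal
      ≤ (μ (closedBall x (r * √(Real.log t⁻¹)))).toReal :=
        ENNReal.toReal_mono (measure_ne_top _ _)
          (measure_mono (setOf_lt_exp_neg_sq_dist_subset x hr ht₀))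
    _ ≤ C * (r * √(Real.log t⁻¹)) ^ s := hμ x _ (by positivity)
    _ = C * r ^ s * Real.log t⁻¹ ^ (s / 2) := by
        rw [Real.mul_rpow hr.le (Real.sqrt_nonneg _), Real.sqrt_eq_rpow,
          ← Real.rpow_mul hlog.le]
        ring_nf
    _ ≤ C * r ^ s * (s ^ (s / 2) * t ^ (-(1 / 2) : ℝ)) := by
        gcongr
        exact Real.log_inv_rpow_half_le hs ht₀ ht₁.le
    _ = C * s ^ (s / 2) * r ^ s * t ^ (-(1 / 2) : ℝ) := by ring

variable [OpensMeasurableSpace X] [IsFiniteMeasure μ]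

lemma integrable_exp_neg_sq_dist_div (x : X) (r : ℝ) :
    Integrable (fun y ↦ Real.exp (-(dist x y / r) ^ 2)) μ :=
  (integrable_const (1 : ℝ)).mono' (by fun_prop) (ae_of_all _ fun y ↦ by
    rw [Real.norm_of_nonneg (Real.exp_nonneg _), Real.exp_le_one_iff]
    exact neg_nonpos.2 (sq_nonneg _))

theorem IsFrostman.integral_exp_neg_sq_dist_le (hμ : IsFrostman μ C s) (hs : 0 < s) (hr : 0 < r)
    (x : X) : ∫ y, Real.exp (-(dist x y / r) ^ 2) ∂μ ≤ 2 * C * s ^ (s / 2) * r ^ s := by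
  set c := C * s ^ (s / 2) * r ^ s
  have hH_int : Integrable ((Ioo 0 1).indicator fun t : ℝ ↦ c * t ^ (-(1 / 2) : ℝ)) := by
    refine (integrable_indicator_iff measurableSet_Ioo).2 (Integrable.const_mul ?_ c)
    exact (intervalIntegral.intervalIntegrable_rpow' (by norm_num)).1.mono_set Ioo_subset_Ioc_self
  have hlevel : ∀ t ∈ Ioi (0 : ℝ), (μ {y | t < Real.exp (-(dist x y / r) ^ 2)}).toReal ≤
      (Ioo 0 1).indicator (fun t : ℝ ↦ c * t ^ (-(1 / 2) : ℝ)) t := by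
    intro t ht
    rcases lt_or_ge t 1 with ht₁ | ht₁
    · rw [indicator_of_mem (mem_Ioo.2 ⟨ht, ht₁⟩)]
      exact hμ.measureReal_setOf_lt_exp_neg_sq_dist_le hs hr x ht ht₁
    · have hempty : {y | t < Real.exp (-(dist x y / r) ^ 2)} = ∅ := by
        refine eq_empty_of_forall_notMem fun y hy ↦ ht₁.not_gt (hy.trans_le ?_)
        exact Real.exp_le_one_iff.2 (neg_nonpos.2 (sq_nonneg _))
      rw [indicator_of_notMem (fun h ↦ ht₁.not_gt (mem_Ioo.1 h).2), hempty]
      simp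
  calc ∫ y, Real.exp (-(dist x y / r) ^ 2) ∂μ
      = ∫ t in Ioi 0, (μ {y | t < Real.exp (-(dist x y / r) ^ 2)}).toReal :=
        (integrable_exp_neg_sq_dist_div x r).integral_eq_integral_meas_lt
          (ae_of_all _ fun _ ↦ Real.exp_nonneg _)
    _ ≤ ∫ t in Ioi 0, (Ioo 0 1).indicator (fun t : ℝ ↦ c * t ^ (-(1 / 2) : ℝ)) t :=
        integral_mono_of_nonneg (ae_of_all _ fun _ ↦ ENNReal.toReal_nonneg) hH_int.integrableOn
          (ae_restrict_of_forall_mem measurableSet_Ioi hlevel)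
    _ = 2 * c := by
        rw [integral_indicator measurableSet_Ioo, Measure.restrict_restrict measurableSet_Ioo,
          inter_eq_left.2 Ioo_subset_Ioi_self, integral_const_mul, integral_Ioo_rpow_neg_one_half]
        ring
    _ = 2 * C * s ^ (s / 2) * r ^ s := by ring

end Frostman

theorem IsFrostman.integral_exp_neg_pi_mul_sq_norm_sub_le {X : Type*} [NormedAddCommGroup X]
    [MeasurableSpace X] [OpensMeasurableSpace X] {μ : Measure X} [IsFiniteMeasure μ] {C s R : ℝ}
    (hμ : IsFrostman μ C s) (hs : 0 < s) (hR : 0 < R) (x : X) :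
    ∫ y, Real.exp (-π * R ^ 2 * ‖x - y‖ ^ 2) ∂μ ≤ 2 * C * s ^ (s / 2) * R ^ (-s) := by
  calc ∫ y, Real.exp (-π * R ^ 2 * ‖x - y‖ ^ 2) ∂μ
      ≤ ∫ y, Real.exp (-(dist x y / R⁻¹) ^ 2) ∂μ := by
        refine integral_mono_of_nonneg (ae_of_all _ fun _ ↦ Real.exp_nonneg _)
          (integrable_exp_neg_sq_dist_div x R⁻¹) (ae_of_all _ fun y ↦ ?_)
        dsimp only
        rw [dist_eq_norm, div_inv_eq_mul, Real.exp_le_exp]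
        nlinarith [Real.pi_gt_three, sq_nonneg (‖x - y‖ * R)]
    _ ≤ 2 * C * s ^ (s / 2) * R⁻¹ ^ s := hμ.integral_exp_neg_sq_dist_le hs (inv_pos.2 hR) x
    _ = 2 * C * s ^ (s / 2) * R ^ (-s) := by rw [Real.inv_rpow hR.le, Real.rpow_neg hR.le]

theorem integral_norm_mul_norm_mul_kernel_le {X E : Type*} [MeasurableSpace X] {μ : Measure X}
    [IsFiniteMeasure μ] [NormedAddCommGroup E] {f : X → E} (hf : MemLp f 2 μ) {k : X → X → ℝ}
    (hk_meas : AEStronglyMeasurable (Function.uncurry k) (μ.prod μ)) {M B : ℝ}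
    (hk_nonneg : ∀ x y, 0 ≤ k x y) (hk_le : ∀ x y, k x y ≤ M) (hk_symm : ∀ x y, k x y = k y x)
    (hk_row : ∀ x, ∫ y, k x y ∂μ ≤ B) :
    ∫ p, ‖f p.1‖ * ‖f p.2‖ * k p.1 p.2 ∂μ.prod μ ≤ B * ∫ x, ‖f x‖ ^ 2 ∂μ := by
  have hf_sq : Integrable (fun x ↦ ‖f x‖ ^ 2) μ := hf.norm.integrable_sq
  have hk_bdd : ∀ᵐ p ∂μ.prod μ, ‖Function.uncurry k p‖ ≤ M := ae_of_all _ fun p ↦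
    (Real.norm_of_nonneg (hk_nonneg p.1 p.2)).trans_le (hk_le p.1 p.2)
  have hint₁ : Integrable (fun p : X × X ↦ ‖f p.1‖ ^ 2 * k p.1 p.2) (μ.prod μ) := by
    have := (hf_sq.mul_prod (integrable_const (1 : ℝ))).bdd_mul hk_meas hk_bdd
    exact this.congr (ae_of_all _ fun p ↦ by simp [Function.uncurry, mul_comm])
  have hint₂ : Integrable (fun p : X × X ↦ ‖f p.2‖ ^ 2 * k p.1 p.2) (μ.prod μ) :=
    hint₁.swap.congr (ae_of_all _ fun p ↦ by simp [hk_symm p.2])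
  have hswap : ∫ p, ‖f p.2‖ ^ 2 * k p.1 p.2 ∂μ.prod μ =
      ∫ p, ‖f p.1‖ ^ 2 * k p.1 p.2 ∂μ.prod μ := by
    rw [← integral_prod_swap]
    simp only [Prod.fst_swap, Prod.snd_swap, hk_symm]
  calc ∫ p, ‖f p.1‖ * ‖f p.2‖ * k p.1 p.2 ∂μ.prod μ
      ≤ ∫ p, (‖f p.1‖ ^ 2 * k p.1 p.2 + ‖f p.2‖ ^ 2 * k p.1 p.2) / 2 ∂μ.prod μ := by
        refine integral_mono_of_nonneg (ae_of_all _ fun p ↦ ?_) ((hint₁.add hint₂).div_const 2)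
          (ae_of_all _ fun p ↦ ?_)
        · have := hk_nonneg p.1 p.2
          positivity
        · have := hk_nonneg p.1 p.2
          have := two_mul_le_add_sq ‖f p.1‖ ‖f p.2‖
          dsimp only
          nlinarith
    _ = ∫ x, ‖f x‖ ^ 2 * ∫ y, k x y ∂μ ∂μ := by
        rw [integral_div, integral_add hint₁ hint₂, hswap, add_self_div_two, integral_prod _ hint₁]
        simp only [integral_const_mul]
    _ ≤ ∫ x, ‖f x‖ ^ 2 * B ∂μ :=
        integral_mono_of_nonneg
          (ae_of_all _ fun x ↦ mul_nonneg (sq_nonneg _) (integral_nonneg (hk_nonneg x)))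
          (hf_sq.mul_const B)
          (ae_of_all _ fun x ↦ mul_le_mul_of_nonneg_left (hk_row x) (sq_nonneg _))
    _ = B * ∫ x, ‖f x‖ ^ 2 ∂μ := by rw [integral_mul_const, mul_comm]

lemma setIntegral_closedBall_le_exp_pi_mul_integral_gaussian {V : Type*} [NormedAddCommGroup V]
    [MeasurableSpace V] [OpensMeasurableSpace V] {ν : Measure V} {g : V → ℝ} (hg : ∀ ξ, 0 ≤ g ξ)
    {R : ℝ} (hR : 0 < R) (hgw : Integrable (fun ξ ↦ g ξ * Real.exp (-π * ‖ξ‖ ^ 2 / R ^ 2)) ν) :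
    ∫ ξ in closedBall 0 R, g ξ ∂ν ≤ Real.exp π * ∫ ξ, g ξ * Real.exp (-π * ‖ξ‖ ^ 2 / R ^ 2) ∂ν := by
  have hweight : ∀ ξ ∈ closedBall (0 : V) R, 1 ≤ Real.exp π * Real.exp (-π * ‖ξ‖ ^ 2 / R ^ 2) := by
    intro ξ hξ
    rw [← Real.exp_add, Real.one_le_exp_iff, neg_mul, neg_div, ← sub_eq_add_neg, sub_nonneg,
      div_le_iff₀ (by positivity)]
    have : ‖ξ‖ ≤ R := by simpa using hξ
    gcongr
  calc ∫ ξ in closedBall 0 R, g ξ ∂ν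
      ≤ ∫ ξ in closedBall 0 R, Real.exp π * (g ξ * Real.exp (-π * ‖ξ‖ ^ 2 / R ^ 2)) ∂ν := by
        refine integral_mono_of_nonneg (ae_of_all _ hg) (hgw.const_mul _).integrableOn
          (ae_restrict_of_forall_mem measurableSet_closedBall fun ξ hξ ↦ ?_)
        have := mul_le_mul_of_nonneg_left (hweight ξ hξ) (hg ξ)
        linarith
    _ ≤ ∫ ξ, Real.exp π * (g ξ * Real.exp (-π * ‖ξ‖ ^ 2 / R ^ 2)) ∂ν :=
        setIntegral_le_integral (hgw.const_mul _) (ae_of_all _ fun ξ ↦ by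
          have := hg ξ
          positivity)
    _ = Real.exp π * ∫ ξ, g ξ * Real.exp (-π * ‖ξ‖ ^ 2 / R ^ 2) ∂ν := integral_const_mul _ _

theorem IsFrostman.integral_norm_ftM_sq_mul_gaussian_le {d : ℕ}
    {μ : Measure (EuclideanSpace ℝ (Fin d))} [IsFiniteMeasure μ] {C s : ℝ}
    (hμ : IsFrostman μ C s) (hs : 0 < s) {f : EuclideanSpace ℝ (Fin d) → ℂ} (hf : MemLp f 2 μ)
    {R : ℝ} (hR : 0 < R) :
    ∫ ξ, ‖ftM μ f ξ‖ ^ 2 * Real.exp (-π * ‖ξ‖ ^ 2 / R ^ 2) ≤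
      2 * C * s ^ (s / 2) * R ^ ((d : ℝ) - s) * ∫ x, ‖f x‖ ^ 2 ∂μ := by
  set k : EuclideanSpace ℝ (Fin d) → EuclideanSpace ℝ (Fin d) → ℝ :=
    fun x y ↦ R ^ d * Real.exp (-π * R ^ 2 * ‖x - y‖ ^ 2)
  have hk_cont : Continuous (Function.uncurry k) := by
    simp only [k, Function.uncurry_def]; fun_prop
  have hk_nonneg : ∀ x y, 0 ≤ k x y := fun x y ↦ by positivity
  have hk_le : ∀ x y, k x y ≤ R ^ d := fun x y ↦
    mul_le_of_le_one_right (by positivity) (Real.exp_le_one_iff.2 (by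
      have : 0 ≤ π * R ^ 2 * ‖x - y‖ ^ 2 := by positivity
      linarith))
  have hk_symm : ∀ x y, k x y = k y x := fun x y ↦ by simp only [k, norm_sub_rev]
  have hk_row : ∀ x, ∫ y, k x y ∂μ ≤ 2 * C * s ^ (s / 2) * R ^ ((d : ℝ) - s) := by
    intro x
    calc ∫ y, k x y ∂μ = R ^ d * ∫ y, Real.exp (-π * R ^ 2 * ‖x - y‖ ^ 2) ∂μ :=
          integral_const_mul _ _
      _ ≤ R ^ d * (2 * C * s ^ (s / 2) * R ^ (-s)) := by
          gcongr
          exact hμ.integral_exp_neg_pi_mul_sq_norm_sub_le hs hR x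
      _ = 2 * C * s ^ (s / 2) * R ^ ((d : ℝ) - s) := by
          rw [Real.rpow_neg hR.le, Real.rpow_sub hR, Real.rpow_natCast]
          field_simp
  have hF := fun z ↦ fourier_gaussian_dilation (V := EuclideanSpace ℝ (Fin d)) hR z
  rw [finrank_euclideanSpace_fin] at hF
  have hident : ∫ ξ, (‖ftM μ f ξ‖ ^ 2 : ℂ) * (Real.exp (-π * ‖ξ‖ ^ 2 / R ^ 2) : ℂ) =
      ∫ p, f p.1 * conj (f p.2) * (k p.1 p.2 : ℂ) ∂μ.prod μ := by
    refine (integral_norm_ftM_sq_mul (hf.integrable one_le_two)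
      (integrable_gaussian_dilation hR).ofReal).trans (integral_congr_ae (ae_of_all _ fun p ↦ ?_))
    exact congrArg _ (hF _)
  calc ∫ ξ, ‖ftM μ f ξ‖ ^ 2 * Real.exp (-π * ‖ξ‖ ^ 2 / R ^ 2)
      = (∫ p, f p.1 * conj (f p.2) * (k p.1 p.2 : ℂ) ∂μ.prod μ).re := by
        rw [← hident]
        norm_cast
    _ ≤ ‖∫ p, f p.1 * conj (f p.2) * (k p.1 p.2 : ℂ) ∂μ.prod μ‖ := Complex.re_le_norm _
    _ ≤ ∫ p, ‖f p.1‖ * ‖f p.2‖ * k p.1 p.2 ∂μ.prod μ :=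
        (norm_integral_le_integral_norm _).trans_eq (integral_congr_ae (ae_of_all _ fun p ↦ by
          simp [Real.norm_of_nonneg (hk_nonneg _ _)]))
    _ ≤ 2 * C * s ^ (s / 2) * R ^ ((d : ℝ) - s) * ∫ x, ‖f x‖ ^ 2 ∂μ :=
        integral_norm_mul_norm_mul_kernel_le hf hk_cont.aestronglyMeasurable hk_nonneg hk_le
          hk_symm hk_row

theorem stmt0_general (d : ℕ) (s : ℝ) (hs0 : 0 < s)
    (μ : Measure (EuclideanSpace ℝ (Fin d))) [IsProbabilityMeasure μ]
    (C : ℝ) (hC : 0 < C)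
    (hfr : ∀ (x : EuclideanSpace ℝ (Fin d)) (r : ℝ), 0 < r →
      (μ (closedBall x r)).toReal ≤ C * r ^ s) :
    ∃ A : ℝ, 0 < A ∧ ∀ f : EuclideanSpace ℝ (Fin d) → ℂ, MemLp f 2 μ →
      ∀ R : ℝ, 1 ≤ R →
      ∫ ξ in closedBall (0 : EuclideanSpace ℝ (Fin d)) R, ‖ftM μ f ξ‖ ^ 2 ≤
        A * R ^ ((d : ℝ) - s) * ∫ x, ‖f x‖ ^ 2 ∂μ := by
  refine ⟨Real.exp π * (2 * C * s ^ (s / 2)), by positivity, fun f hf R hR ↦ ?_⟩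
  have hR₀ : 0 < R := one_pos.trans_le hR
  have hweighted := integrable_norm_ftM_sq_mul (hf.integrable one_le_two)
    (integrable_gaussian_dilation (V := EuclideanSpace ℝ (Fin d)) hR₀)
  calc ∫ ξ in closedBall 0 R, ‖ftM μ f ξ‖ ^ 2
      ≤ Real.exp π * ∫ ξ, ‖ftM μ f ξ‖ ^ 2 * Real.exp (-π * ‖ξ‖ ^ 2 / R ^ 2) :=
        setIntegral_closedBall_le_exp_pi_mul_integral_gaussian (fun _ ↦ by positivity) hR₀
          hweighted
    _ ≤ Real.exp π * (2 * C * s ^ (s / 2) * R ^ ((d : ℝ) - s) * ∫ x, ‖f x‖ ^ 2 ∂μ) := by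
        gcongr
        exact IsFrostman.integral_norm_ftM_sq_mul_gaussian_le hfr hs0 hf hR₀
    _ = Real.exp π * (2 * C * s ^ (s / 2)) * R ^ ((d : ℝ) - s) * ∫ x, ‖f x‖ ^ 2 ∂μ := by ring

/-- Restriction lemma for Frostman measures: `∫_{|ξ|≤R} |\widehat{f dμ}|² ≲ R^{d-s} ‖f‖²_{L²(μ)}`. -/
theorem stmt0 (d : ℕ) (hd : 1 ≤ d) (s : ℝ) (hs0 : 0 < s) (hsd : s ≤ d)
    (μ : Measure (EuclideanSpace ℝ (Fin d))) [IsProbabilityMeasure μ]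
    (K : Set (EuclideanSpace ℝ (Fin d))) (hK : IsCompact K) (hμK : μ Kᶜ = 0)
    (C : ℝ) (hC : 0 < C)
    (hfr : ∀ (x : EuclideanSpace ℝ (Fin d)) (r : ℝ), 0 < r →
      (μ (closedBall x r)).toReal ≤ C * r ^ s) :
    ∃ A : ℝ, 0 < A ∧ ∀ f : EuclideanSpace ℝ (Fin d) → ℂ, MemLp f 2 μ →
      ∀ R : ℝ, 1 ≤ R →
      ∫ ξ in closedBall (0 : EuclideanSpace ℝ (Fin d)) R, ‖ftM μ f ξ‖ ^ 2 ≤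
        A * R ^ ((d : ℝ) - s) * ∫ x, ‖f x‖ ^ 2 ∂μ :=
  stmt0_general d s hs0 μ C hC hfr
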